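/- For every n ≥ 2, the grog numbers of the finite Jaco graphs are strictly increasing: g(J_{n+1}(1)) > g(J_n(1)). -/

import Mathlib

/-- In-degree of vertex `v_i` in the infinite Jaco graph `J_∞(1)`, defined by strong
recursion: `d⁻(v_i)` is the number of `k < i` with an arc `(v_k, v_i)`, where for `k < i`
the arc `(v_k, v_i)` is present iff `2k - d⁻(v_k) ≥ i` (and `k ≥ 1`). -/
noncomputable def jacoInDeg (n : ℕ) : ℕ :=
  Nat.strongRecOn n (fun n ih =>
    ((Finset.range n).attach.filter
      (fun k => 1 ≤ k.1 ∧ n ≤ 2 * k.1 - ih k.1 (Finset.mem_range.mp k.2))).card)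

/-- The arc `(v_i, v_j)` of the infinite Jaco graph `J_∞(1)` (vertices indexed from 1):
present iff `i < j` and `2i - d⁻(v_i) ≥ j`. -/
def jacoArc (i j : ℕ) : Prop :=
  1 ≤ i ∧ i < j ∧ j ≤ 2 * i - jacoInDeg i

noncomputable instance (i j : ℕ) : Decidable (jacoArc i j) := by unfold jacoArc; infer_instance

/-- Out-degree of `v_i` in the finite Jaco graph `J_n(1)` (vertex set `{v_1, …, v_n}`). -/
noncomputable  def jacoOutDeg (n i : ℕ) : ℕ :=
  ((Finset.Icc 1 n).filter (fun j => jacoArc i j)).card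

/-- In-degree of `v_i` in the finite Jaco graph `J_n(1)`. -/
noncomputable def jacoInDegFin (n i : ℕ) : ℕ :=
  ((Finset.Icc 1 n).filter (fun k => jacoArc k i)).card

/-- Adjacency in the competition graph `C(J_n(1))`: distinct vertices `v_a, v_b` of
`J_n(1)` are adjacent iff some vertex `v_w` of `J_n(1)` is a common out-neighbour. -/
def jacoCompAdj (n a b : ℕ) : Prop :=
  a ≠ b ∧ a ∈ Finset.Icc 1 n ∧ b ∈ Finset.Icc 1 n ∧
    ∃ w ∈ Finset.Icc 1 n, jacoArc a w ∧ jacoArc b w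


/-- The arc set of the finite Jaco graph `J_n(1)` as a finite set of pairs. -/
noncomputable def jacoArcs (n : ℕ) : Finset (ℕ × ℕ) :=
  (Finset.Icc 1 n ×ˢ Finset.Icc 1 n).filter (fun a => jacoArc a.1 a.2)

/-- A state of the Grog algorithm: a finite set of remaining arcs (on vertices `v_1, v_2, …`,
identified with positive naturals) together with the current population of every vertex. -/
structure PPState where
  arcs : Finset (ℕ × ℕ)
  pop : ℕ → ℕ

/-- One predation step along the arc `a = (u, w)`: the arc is deleted and the populations
of `u` and `w` each decrease by `1`. -/
def predStep (s : PPState) (a : ℕ × ℕ) : PPState :=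
  ⟨s.arcs.erase a, fun v => if v = a.1 ∨ v = a.2 then s.pop v - 1 else s.pop v⟩

/-- The arc `a` may be predated along in state `s`: it is a current arc and both of its
endpoints have current population at least `1`. -/
def validArc (s : PPState) (a : ℕ × ℕ) : Prop :=
  a ∈ s.arcs ∧ 1 ≤ s.pop a.1 ∧ 1 ≤ s.pop a.2

/-- Run a sequence of predation steps from a state. -/
def runSeq : PPState → List (ℕ × ℕ) → PPState
  | s, [] => s
  | s, a :: l => runSeq (predStep s a) l

/-- The sequence of predation steps is valid from state `s`. -/
def ValidSeq : PPState → List (ℕ × ℕ) → Prop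
  | _, [] => True
  | s, a :: l => validArc s a ∧ ValidSeq (predStep s a) l

/-- No further predation step is possible. -/
def Terminal (s : PPState) : Prop := ∀ a ∈ s.arcs, ¬ validArc s a

/-- A predator-prey strategy from state `s`: a maximal valid sequence of predation steps. -/
def IsStrategy (s : PPState) (l : List (ℕ × ℕ)) : Prop :=
  ValidSeq s l ∧ Terminal (runSeq s l)

/-- The initial state of the digraph with arc set `A`, with initial populations `ρ(v_i) = i`. -/
def initState (A : Finset (ℕ × ℕ)) : PPState := ⟨A, id⟩

/-- The (residual) population of a state, summed over the vertices `v_1, …, v_n`. -/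
def resid (n : ℕ) (s : PPState) : ℕ := ∑ v ∈ Finset.Icc 1 n, s.pop v

/-- The grog number of the digraph on `v_1, …, v_n` with arc set `A`: the minimum of the
residual population over all predator-prey strategies. -/
noncomputable def grogD (n : ℕ) (A : Finset (ℕ × ℕ)) : ℕ :=
  sInf {r | ∃ l, IsStrategy (initState A) l ∧ resid n (runSeq (initState A) l) = r}

/-- `A` is an orientation of the labelled graph obtained from the simple graph `G` via the
bijective labelling `f` of its vertices by `v_1, …, v_n`. -/
def LabelledOrientation {V : Type*} (G : SimpleGraph V) (n : ℕ) (f : V → ℕ)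
    (A : Finset (ℕ × ℕ)) : Prop :=
  Function.Injective f ∧ Set.range f = ↑(Finset.Icc 1 n) ∧
  (∀ u v, G.Adj u v ↔ ((f u, f v) ∈ A ∨ (f v, f u) ∈ A)) ∧
  (∀ u v, ¬(((f u, f v) ∈ A) ∧ ((f v, f u) ∈ A))) ∧
  (∀ a ∈ A, ∃ u v, G.Adj u v ∧ a = (f u, f v))

/-- `A` is an orientation of the path `P_n` whose vertices, in path order, are labelled
`p 0, p 1, …, p (n-1)`, where `p` is a bijection onto `{1, …, n}`. -/
def PathOrientation (n : ℕ) (p : ℕ → ℕ) (A : Finset (ℕ × ℕ)) : Prop :=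
  Set.BijOn p (Set.Iio n) (Set.Icc 1 n) ∧
  (∀ i, i + 1 < n →
    (((p i, p (i+1)) ∈ A ∨ (p (i+1), p i) ∈ A) ∧
      ¬(((p i, p (i+1)) ∈ A) ∧ ((p (i+1), p i) ∈ A)))) ∧
  (∀ a ∈ A, ∃ i, i + 1 < n ∧ (a = (p i, p (i+1)) ∨ a = (p (i+1), p i)))

/-- `A` is an orientation of the cycle `C_n` whose vertices, in cyclic order, are labelled
`p 0, p 1, …, p (n-1)`, where `p` is a bijection onto `{1, …, n}`. -/
def CycleOrientation (n : ℕ) (p : ℕ → ℕ) (A : Finset (ℕ × ℕ)) : Prop :=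
  Set.BijOn p (Set.Iio n) (Set.Icc 1 n) ∧
  (∀ i < n,
    (((p i, p ((i+1) % n)) ∈ A ∨ (p ((i+1) % n), p i) ∈ A) ∧
      ¬(((p i, p ((i+1) % n)) ∈ A) ∧ ((p ((i+1) % n), p i) ∈ A)))) ∧
  (∀ a ∈ A, ∃ i < n, a = (p i, p ((i+1) % n)) ∨ a = (p ((i+1) % n), p i))

/-- The grog number of the finite Jaco graph `J_n(1)`. -/
noncomputable def grogJaco (n : ℕ) : ℕ := grogD n (jacoArcs n)

/-!
Every predation step removes exactly two individuals, so a strategy of length `k` leaves the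
initial population minus `2k`, and the grog number is attained by a longest valid sequence of
predations. Passing from `J_n(1)` to `J_{n+1}(1)` adds the vertex `v_{n+1}` of population `n + 1`
and only the `d⁻(v_{n+1})` arcs entering it; dropping those arcs from a valid sequence in
`J_{n+1}(1)` leaves a valid sequence in `J_n(1)`. Hence
`g(J_{n+1}(1)) ≥ g(J_n(1)) + (n + 1) - 2 d⁻(v_{n+1})`, and `2 d⁻(v_{n+1}) ≤ n` because every
in-neighbour `v_k` of `v_{n+1}` has `k ≥ 2`, hence in-degree at least one, hence `2k ≥ n + 2`.
-/

open Finset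

def IsLooplessOn (n : ℕ) (A : Finset (ℕ × ℕ)) : Prop :=
  ∀ a ∈ A, a.1 ≠ a.2 ∧ a.1 ∈ Icc 1 n ∧ a.2 ∈ Icc 1 n

section Predation

variable {n : ℕ} {s t : PPState} {l : List (ℕ × ℕ)}

theorem validSeq_append (s : PPState) (l₁ l₂ : List (ℕ × ℕ)) :
    ValidSeq s (l₁ ++ l₂) ↔ ValidSeq s l₁ ∧ ValidSeq (runSeq s l₁) l₂ := by
  induction l₁ generalizing s with
  | nil => simp [ValidSeq, runSeq]
  | cons a l ih => simp only [List.cons_append, ValidSeq, runSeq, ih, and_assoc]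

theorem ValidSeq.mem_arcs (h : ValidSeq s l) {a : ℕ × ℕ} (ha : a ∈ l) : a ∈ s.arcs := by
  induction l generalizing s with
  | nil => simp at ha
  | cons b l ih =>
    rcases List.mem_cons.mp ha with rfl | ha
    · exact h.1.1
    · exact mem_of_mem_erase (ih h.2 ha)

theorem ValidSeq.nodup (h : ValidSeq s l) : l.Nodup := by
  induction l generalizing s with
  | nil => exact List.nodup_nil
  | cons a l ih =>
    exact List.nodup_cons.mpr ⟨fun ha => notMem_erase a s.arcs (h.2.mem_arcs ha), ih h.2⟩

theorem ValidSeq.length_le_card (h : ValidSeq s l) : l.length ≤ s.arcs.card := by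
  rw [← List.toFinset_card_of_nodup h.nodup]
  exact card_le_card fun a ha => h.mem_arcs (List.mem_toFinset.mp ha)

theorem ValidSeq.filter {p : ℕ × ℕ → Bool} (h : ValidSeq s l)
    (harcs : ∀ a ∈ s.arcs, p a → a ∈ t.arcs) (hpop : ∀ v, s.pop v ≤ t.pop v) :
    ValidSeq t (l.filter p) := by
  induction l generalizing s t with
  | nil => trivial
  | cons a l ih =>
    by_cases hpa : p a
    · rw [List.filter_cons_of_pos hpa]
      refine ⟨⟨harcs a h.1.1 hpa, h.1.2.1.trans (hpop _), h.1.2.2.trans (hpop _)⟩,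
        ih h.2 ?_ ?_⟩
      · intro b hb hpb
        exact mem_erase.mpr ⟨ne_of_mem_erase hb, harcs b (mem_of_mem_erase hb) hpb⟩
      · intro v
        simp only [predStep]
        split <;> [exact Nat.sub_le_sub_right (hpop v) 1; exact hpop v]
    · rw [List.filter_cons_of_neg hpa]
      refine ih h.2 (fun b hb => harcs b (mem_of_mem_erase hb)) fun v => le_trans ?_ (hpop v)
      simp only [predStep]
      split <;> omega

theorem resid_predStep {a : ℕ × ℕ} (hs : IsLooplessOn n s.arcs) (h : validArc s a) :
    resid n (predStep s a) + 2 = resid n s := by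
  obtain ⟨hne, h1, h2⟩ := hs a h.1
  have h2' : a.2 ∈ (Icc 1 n).erase a.1 := mem_erase.mpr ⟨hne.symm, h2⟩
  simp only [resid, predStep]
  rw [← add_sum_erase _ _ h1, ← add_sum_erase _ _ h1, ← add_sum_erase _ _ h2',
    ← add_sum_erase _ _ h2', sum_congr rfl fun v hv => if_neg ?_]
  · simp only [true_or, or_true, if_true]
    grind [validArc]
  · simp only [mem_erase] at hv
    tauto

theorem resid_runSeq (hs : IsLooplessOn n s.arcs) (h : ValidSeq s l) :
    resid n (runSeq s l) + 2 * l.length = resid n s := by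
  induction l generalizing s with
  | nil => rfl
  | cons a l ih =>
    have := ih (fun b hb => hs b (mem_of_mem_erase hb)) h.2
    have := resid_predStep hs h.1
    simp only [runSeq, List.length_cons]
    omega

end Predation

section MaxPredations

variable {n : ℕ} {A B : Finset (ℕ × ℕ)}

def predationLengths (A : Finset (ℕ × ℕ)) : Set ℕ :=
  {k | ∃ l, ValidSeq (initState A) l ∧ l.length = k}

noncomputable def maxPredations (A : Finset (ℕ × ℕ)) : ℕ := sSup (predationLengths A)

theorem bddAbove_predationLengths (A : Finset (ℕ × ℕ)) : BddAbove (predationLengths A) := by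
  refine ⟨A.card, ?_⟩
  rintro _ ⟨l, hl, rfl⟩
  exact hl.length_le_card

theorem exists_validSeq_length_eq_maxPredations (A : Finset (ℕ × ℕ)) :
    ∃ l, ValidSeq (initState A) l ∧ l.length = maxPredations A :=
  Nat.sSup_mem (s := predationLengths A) ⟨0, [], trivial, rfl⟩ (bddAbove_predationLengths A)

theorem ValidSeq.length_le_maxPredations {l : List (ℕ × ℕ)} (h : ValidSeq (initState A) l) :
    l.length ≤ maxPredations A :=
  le_csSup (bddAbove_predationLengths A) ⟨l, h, rfl⟩

theorem grogD_add_two_mul_maxPredations (hA : IsLooplessOn n A) :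
    grogD n A + 2 * maxPredations A = resid n (initState A) := by
  obtain ⟨l, hl, hlen⟩ := exists_validSeq_length_eq_maxPredations A
  have hterm : Terminal (runSeq (initState A) l) := fun a _ ha => by
    have := ((validSeq_append _ l [a]).mpr ⟨hl, ha, trivial⟩).length_le_maxPredations
    simp only [List.length_append, List.length_singleton] at this
    omega
  have hleast : IsLeast
      {r | ∃ l, IsStrategy (initState A) l ∧ resid n (runSeq (initState A) l) = r}
      (resid n (runSeq (initState A) l)) := by
    refine ⟨⟨l, ⟨hl, hterm⟩, rfl⟩, ?_⟩
    rintro _ ⟨l', ⟨hl', -⟩, rfl⟩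
    have := resid_runSeq hA hl
    have := resid_runSeq hA hl'
    have := hl'.length_le_maxPredations
    omega
  have := resid_runSeq hA hl
  rw [grogD, hleast.csInf_eq]
  omega

theorem maxPredations_le_add_card_sdiff (A B : Finset (ℕ × ℕ)) :
    maxPredations B ≤ maxPredations A + (B \ A).card := by
  obtain ⟨l, hl, hlen⟩ := exists_validSeq_length_eq_maxPredations B
  have hin : (l.filter (· ∈ A)).length ≤ maxPredations A :=
    (hl.filter (t := initState A) (fun _ _ ha => of_decide_eq_true ha) fun _ => le_rfl)
      |>.length_le_maxPredations
  have hout : (l.filter (· ∉ A)).length ≤ (B \ A).card := by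
    rw [← List.toFinset_card_of_nodup (hl.nodup.filter _)]
    refine card_le_card fun a ha => ?_
    simp only [List.mem_toFinset, List.mem_filter, decide_eq_true_eq] at ha
    exact mem_sdiff.mpr ⟨hl.mem_arcs ha.1, ha.2⟩
  have hsplit := List.length_eq_length_filter_add (l := l) (· ∈ A)
  simp only [decide_not] at hsplit hout
  omega

theorem resid_initState (n : ℕ) (A : Finset (ℕ × ℕ)) :
    resid n (initState A) = ∑ v ∈ Icc 1 n, v :=
  rfl

theorem grogD_add_succ_le (hA : IsLooplessOn n A) (hB : IsLooplessOn (n + 1) B) :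
    grogD n A + (n + 1) ≤ grogD (n + 1) B + 2 * (B \ A).card := by
  have hgA := grogD_add_two_mul_maxPredations hA
  have hgB := grogD_add_two_mul_maxPredations hB
  have hmax := maxPredations_le_add_card_sdiff A B
  rw [resid_initState] at hgA hgB
  rw [sum_Icc_succ_top (by omega)] at hgB
  omega

end MaxPredations

section Jaco

theorem jacoInDeg_eq (n : ℕ) :
    jacoInDeg n = ((range n).filter fun k => 1 ≤ k ∧ n ≤ 2 * k - jacoInDeg k).card := by
  rw [jacoInDeg, Nat.strongRecOn_eq, filter_attach', card_map, card_attach]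
  congr 1
  ext k
  simp only [mem_range, exists_and_left, exists_prop, mem_filter, jacoInDeg]
  grind

theorem jacoInDeg_le_half (m : ℕ) : jacoInDeg m ≤ m / 2 := by
  rw [jacoInDeg_eq]
  calc ((range m).filter fun k => 1 ≤ k ∧ m ≤ 2 * k - jacoInDeg k).card
      ≤ (Ico ((m + 1) / 2) m).card := by
        refine card_le_card fun k hk => ?_
        simp only [mem_filter, mem_range] at hk
        simp only [mem_Ico]
        omega
    _ ≤ m / 2 := by
        rw [Nat.card_Ico]
        omega

theorem one_le_jacoInDeg {k : ℕ} (hk : 2 ≤ k) : 1 ≤ jacoInDeg k := by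
  rw [jacoInDeg_eq]
  have := jacoInDeg_le_half (k - 1)
  exact card_pos.mpr ⟨k - 1, mem_filter.mpr ⟨mem_range.mpr (by omega), by omega, by omega⟩⟩

theorem two_mul_jacoInDeg_succ_le {n : ℕ} (hn : 2 ≤ n) : 2 * jacoInDeg (n + 1) ≤ n := by
  rw [jacoInDeg_eq]
  have hsub : ((range (n + 1)).filter fun k => 1 ≤ k ∧ n + 1 ≤ 2 * k - jacoInDeg k)
      ⊆ Ico ((n + 3) / 2) (n + 1) := by
    intro k hk
    simp only [mem_filter, mem_range] at hk
    have := jacoInDeg_le_half k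
    have : k ≠ 1 := by rintro rfl; omega
    have := one_le_jacoInDeg (k := k) (by omega)
    simp only [mem_Ico]
    omega
  have := card_le_card hsub
  rw [Nat.card_Ico] at this
  omega

theorem isLooplessOn_jacoArcs (n : ℕ) : IsLooplessOn n (jacoArcs n) := by
  intro a ha
  rw [jacoArcs, mem_filter, mem_product] at ha
  exact ⟨ha.2.2.1.ne, ha.1.1, ha.1.2⟩

theorem card_jacoArcs_succ_sdiff_le (n : ℕ) :
    (jacoArcs (n + 1) \ jacoArcs n).card ≤ jacoInDeg (n + 1) := by
  have hnew : ∀ a ∈ jacoArcs (n + 1) \ jacoArcs n, a.2 = n + 1 ∧ jacoArc a.1 (n + 1) := by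
    intro a ha
    simp only [jacoArcs, mem_sdiff, mem_filter, mem_product, mem_Icc] at ha
    obtain ⟨⟨⟨⟨h1, -⟩, h2, h2n⟩, harc⟩, hold⟩ := ha
    have hlast : a.2 = n + 1 := by
      by_contra
      exact hold ⟨⟨⟨h1, by have := harc.2.1; omega⟩, h2, by omega⟩, harc⟩
    exact ⟨hlast, hlast ▸ harc⟩
  rw [jacoInDeg_eq]
  refine card_le_card_of_injOn Prod.fst (fun a ha => ?_) fun a ha b hb hab => ?_
  · obtain ⟨-, h1, hlt, hle⟩ := hnew a ha
    exact mem_filter.mpr ⟨mem_range.mpr hlt, h1, hle⟩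
  · exact Prod.ext hab ((hnew a ha).1.trans (hnew b hb).1.symm)

end Jaco

/-- For every `n ≥ 2`, the grog numbers of the finite Jaco graphs are
strictly increasing: `g(J_{n+1}(1)) > g(J_n(1))`. -/
theorem grog_number_of_Jaco_strict_mono (n : ℕ) (hn : 2 ≤ n) :
    grogJaco n < grogJaco (n + 1) := by
  have hstep := grogD_add_succ_le (isLooplessOn_jacoArcs n) (isLooplessOn_jacoArcs (n + 1))
  have hnew := card_jacoArcs_succ_sdiff_le n
  have hdeg := two_mul_jacoInDeg_succ_le hn
  unfold grogJaco
  omega
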